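/- arXiv:1105.2480 — 5 statements merged into one kernel-verified Lean document; each statement's English description precedes it below -/
import Mathlib

section
/- Let gcd(n,r)=1 and write Q_{n,r}(t) = ((t^{1/n}−t)/(1−t^{1/n}))·((t^{1/r}−t)/(1−t^{1/r})) = Σ_α c_α t^α. Then Q_{n,r}(t) is a polynomial in t^{1/(nr)} with integer coefficients, no exponent α of Q_{n,r} equals 1, and the total sum of coefficients Σ_α c_α equals (n−1)(r−1). -/
/-!
Put `s = t^{1/(nr)}`. Each factor `(u - u^m)/(1 - u)` is the truncated geometric sum
`u + ⋯ + u^{m-1}`, so `Q = (∑_{0<i<n} s^{ri}) (∑_{0<j<r} s^{nj})` has integer coefficients and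
`Q(1) = (n-1)(r-1)`. The monomial `s^{nr}` (that is, `t^1`) would need `ri + nj = nr` with
`i, j > 0`; then `r ∣ nj`, so `r ∣ j` by coprimality, and `nj ≥ nr` is too large.
-/

open Polynomial Finset

section

variable {R : Type*}

theorem Polynomial.sum_Ico_X_pow_mul_one_sub [CommRing R] (k : ℕ) {m : ℕ} (hm : 1 ≤ m) :
    (∑ i ∈ Ico 1 m, (X ^ k : R[X]) ^ i) * (1 - X ^ k) = X ^ k - X ^ (m * k) := by
  rw [geom_sum_Ico_mul_neg _ hm, pow_one, ← pow_mul, mul_comm k]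

theorem Polynomial.coeff_sum_Ico_mul_sum_Ico_eq_zero [Semiring R] {n r : ℕ}
    (hnr : n.Coprime r) :
    ((∑ i ∈ Ico 1 n, (X ^ r : R[X]) ^ i) * ∑ j ∈ Ico 1 r, (X ^ n) ^ j).coeff (n * r) = 0 := by
  simp only [← pow_mul, sum_mul_sum, ← pow_add, finsetSum_coeff, coeff_X_pow]
  refine sum_eq_zero fun i hi => sum_eq_zero fun j hj => if_neg fun h => ?_
  rw [mem_Ico] at hi hj
  exact hnr.mul_add_mul_ne_mul (a := j) (b := i) (by omega) (by omega) (by linarith)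

end

/-- For coprime positive integers `n, r`, the expression
`Q_{n,r}(t) = ((t^{1/n}−t)/(1−t^{1/n}))·((t^{1/r}−t)/(1−t^{1/r}))`, written in the
variable `s = t^{1/(nr)}` (so `t^{1/n} = s^r`, `t^{1/r} = s^n`, `t = s^{nr}`), is a
polynomial `Q` in `s` with integer coefficients; no exponent of `Q` equals `1`
(i.e. the coefficient of `s^{nr}` vanishes), and the sum of all coefficients is
`(n−1)(r−1)`. -/
theorem stmt2 (n r : ℕ) (hn : 0 < n) (hr : 0 < r) (hnr : Nat.Coprime n r) :
    ∃ Q : Polynomial ℤ,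
      Q * ((1 - X ^ r) * (1 - X ^ n)) =
        (X ^ r - X ^ (n * r)) * (X ^ n - X ^ (n * r)) ∧
      Q.coeff (n * r) = 0 ∧
      Q.eval 1 = ((n : ℤ) - 1) * ((r : ℤ) - 1) := by
  refine ⟨(∑ i ∈ Ico 1 n, (X ^ r) ^ i) * ∑ j ∈ Ico 1 r, (X ^ n) ^ j, ?_,
    coeff_sum_Ico_mul_sum_Ico_eq_zero hnr, ?_⟩
  · rw [mul_mul_mul_comm, sum_Ico_X_pow_mul_one_sub r hn, sum_Ico_X_pow_mul_one_sub n hr,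
      mul_comm r n]
  · simp [eval_finsetSum, Nat.cast_sub (show 1 ≤ n from hn), Nat.cast_sub (show 1 ≤ r from hr)]
end

section
/- Let M₀ = ℤ^d and λ₁ ≤ ⋯ ≤ λ_g in ℚ^d_{≥0} with lattices M_j = M_{j−1} + ℤλ_j and indices n_j = [M_j : M_{j−1}] > 1. Define γ₁ = λ₁ and γ_{j+1} = n_j γ_j + λ_{j+1} − λ_j. Then for each j = 1, …, g, the order of γ_j + M_{j−1} in the finite abelian group M_j/M_{j−1} equals n_j. -/
/-!
By induction, `γ_j ≡ λ_j` modulo `M_{j-1}`: if `γ_j - λ_j ∈ M_{j-1}`, then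
`γ_{j+1} - λ_{j+1} = n_j (γ_j - λ_j) + (n_j λ_j - λ_j)` lies in `M_j`, because `M_{j-1} ≤ M_j`,
`λ_j ∈ M_j` and `n_j λ_j ∈ M_{j-1}`. So `γ_j` and `λ_j` have the same class in `M_j / M_{j-1}`,
and the order of that class is `n_j` by definition.
-/

open QuotientAddGroup

section

variable {G : Type*} [AddCommGroup G]

lemma nsmul_addOrderOf_mk_mem (H : AddSubgroup G) (x : G) :
    addOrderOf (x : G ⧸ H) • x ∈ H := by
  rw [← eq_zero_iff, mk_nsmul]
  exact addOrderOf_nsmul_eq_zero _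

lemma nsmul_add_sub_sub_mem {H K : AddSubgroup G} (hHK : H ≤ K) {x y z : G} {n : ℕ}
    (hxy : x - y ∈ H) (hy : y ∈ K) (hny : n • y ∈ H) :
    n • x + (z - y) - z ∈ K := by
  have hsplit : n • x + (z - y) - z = n • (x - y) + (n • y - y) := by
    rw [nsmul_sub]; abel
  rw [hsplit]
  exact add_mem (hHK (AddSubgroup.nsmul_mem _ hxy n)) (sub_mem (hHK hny) hy)

theorem sub_mem_of_semigroup_recursion (g : ℕ) (lam γ : ℕ → G) (M : ℕ → AddSubgroup G)
    (n : ℕ → ℕ)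
    (hM : ∀ j, 1 ≤ j → j ≤ g → M j = M (j - 1) ⊔ AddSubgroup.closure {lam j})
    (hn : ∀ j, 1 ≤ j → j ≤ g → addOrderOf (lam j : G ⧸ M (j - 1)) = n j)
    (hγ1 : γ 1 = lam 1)
    (hγ : ∀ j, 1 ≤ j → j < g → γ (j + 1) = n j • γ j + (lam (j + 1) - lam j)) :
    ∀ j, 1 ≤ j → j ≤ g → γ j - lam j ∈ M (j - 1) := by
  intro j hj1
  induction j, hj1 using Nat.le_induction with
  | base => simp [hγ1]
  | succ j hj1 ih =>
    intro (hjg : j < g)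
    have hMj := hM j hj1 hjg.le
    rw [hγ j hj1 hjg, Nat.add_sub_cancel]
    refine nsmul_add_sub_sub_mem (hMj ▸ le_sup_left) (ih (by omega))
      (hMj ▸ AddSubgroup.mem_sup_right (AddSubgroup.mem_closure_singleton_self _)) ?_
    exact hn j hj1 hjg.le ▸ nsmul_addOrderOf_mk_mem _ _

end

theorem stmt4_general (d g : ℕ) (lam γ : ℕ → Fin d → ℚ)
    (M : ℕ → AddSubgroup (Fin d → ℚ)) (n : ℕ → ℕ)
    (hM : ∀ j, 1 ≤ j → j ≤ g → M j = M (j - 1) ⊔ AddSubgroup.closure {lam j})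
    (hn : ∀ j, 1 ≤ j → j ≤ g →
      addOrderOf ((QuotientAddGroup.mk (lam j) : (Fin d → ℚ) ⧸ M (j - 1))) = n j)
    (hγ1 : γ 1 = lam 1)
    (hγ : ∀ j, 1 ≤ j → j < g →
      γ (j + 1) = (n j : ℚ) • γ j + (lam (j + 1) - lam j)) :
    ∀ j, 1 ≤ j → j ≤ g →
      addOrderOf ((QuotientAddGroup.mk (γ j) : (Fin d → ℚ) ⧸ M (j - 1))) = n j := by
  have hγ_nsmul : ∀ j, 1 ≤ j → j < g → γ (j + 1) = n j • γ j + (lam (j + 1) - lam j) :=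
    fun j hj1 hjg ↦ by rw [hγ j hj1 hjg, Nat.cast_smul_eq_nsmul]
  intro j hj1 hjg
  rw [eq_iff_sub_mem.2 (sub_mem_of_semigroup_recursion g lam γ M n hM hn hγ1 hγ_nsmul j hj1 hjg),
    hn j hj1 hjg]

/-- Let `M₀ = ℤ^d ⊂ ℚ^d` and `λ₁, …, λ_g ∈ ℚ^d_{≥0}` with lattices
`M_j = M_{j−1} + ℤλ_j` and `n_j` the order of `λ_j + M_{j−1}` in `M_j/M_{j−1}`
(equal to the index `[M_j : M_{j−1}] > 1`).  Define `γ₁ = λ₁` and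
`γ_{j+1} = n_j γ_j + λ_{j+1} − λ_j`.  Then for each `j = 1, …, g`, the order of
`γ_j + M_{j−1}` in `M_j/M_{j−1}` equals `n_j`. -/
theorem stmt4 (d g : ℕ) (lam γ : ℕ → Fin d → ℚ)
    (M : ℕ → AddSubgroup (Fin d → ℚ)) (n : ℕ → ℕ)
    (hM0 : ∀ x, x ∈ M 0 ↔ ∀ i, ∃ z : ℤ, x i = z)
    (hlam0 : ∀ j i, 1 ≤ j → j ≤ g → 0 ≤ lam j i)
    (hlamle : ∀ j, 1 ≤ j → j < g → ∀ i, lam j i ≤ lam (j + 1) i)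
    (hM : ∀ j, 1 ≤ j → j ≤ g → M j = M (j - 1) ⊔ AddSubgroup.closure {lam j})
    (hn : ∀ j, 1 ≤ j → j ≤ g →
      addOrderOf ((QuotientAddGroup.mk (lam j) : (Fin d → ℚ) ⧸ M (j - 1))) = n j)
    (hn1 : ∀ j, 1 ≤ j → j ≤ g → 1 < n j)
    (hγ1 : γ 1 = lam 1)
    (hγ : ∀ j, 1 ≤ j → j < g →
      γ (j + 1) = (n j : ℚ) • γ j + (lam (j + 1) - lam j)) :
    ∀ j, 1 ≤ j → j ≤ g →
      addOrderOf ((QuotientAddGroup.mk (γ j) : (Fin d → ℚ) ⧸ M (j - 1))) = n j :=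
  stmt4_general d g lam γ M n hM hn hγ1 hγ
end

section
/- There exists a unique ring homomorphism lim_{T→∞} from the subring M[[T]]_{sr} ⊆ M[[T]] generated over M by 1 and finite products of terms L^e T^i (1 − L^e T^i)^{−1} (with e ∈ ℤ, i ∈ ℤ_{>0}) to M, sending each L^e T^i (1 − L^e T^i)^{−1} to −1. Moreover, if p(T)/q(T) ∈ M[[T]]_{sr} with deg_T p < deg_T q, then lim_{T→∞} p(T)/q(T) = 0. -/
/-- The set of "generators" `L^e T^i (1 − L^e T^i)^{−1}` (with `e ∈ ℤ`, `i > 0`)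
inside the power series ring `M[[T]]`, described implicitly as the unique
solutions `y` of `y·(1 − L^e T^i) = L^e T^i`. -/
def srGens (M : Type*) [CommRing M] (L : Mˣ) : Set (PowerSeries M) :=
  {y | ∃ (e : ℤ) (i : ℕ), 0 < i ∧
    y * (1 - (PowerSeries.C : M →+* PowerSeries M) ((L ^ e : Mˣ) : M) * (PowerSeries.X : PowerSeries M) ^ i) =
      (PowerSeries.C : M →+* PowerSeries M) ((L ^ e : Mˣ) : M) * (PowerSeries.X : PowerSeries M) ^ i}

/-- The subring `M[[T]]_{sr}` of `M[[T]]` generated by the constants and by the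
elements `L^e T^i (1 − L^e T^i)^{−1}` with `e ∈ ℤ`, `i ∈ ℤ_{>0}`. -/
noncomputable def Sr (M : Type*) [CommRing M] (L : Mˣ) : Subring (PowerSeries M) :=
  Subring.closure (Set.range ((PowerSeries.C : M →+* PowerSeries M)) ∪ srGens M L)

/-- The defining property of the limit homomorphism `lim_{T→∞}`:
it is the identity on constants and sends each `L^e T^i (1 − L^e T^i)^{−1}` to `−1`. -/
def LimCond (M : Type*) [CommRing M] (L : Mˣ) (φ : Sr M L →+* M) : Prop :=
  (∀ (m : M) (h : (PowerSeries.C : M →+* PowerSeries M) m ∈ Sr M L), φ ⟨(PowerSeries.C : M →+* PowerSeries M) m, h⟩ = m) ∧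
  (∀ (y : PowerSeries M) (_ : y ∈ srGens M L) (h : y ∈ Sr M L), φ ⟨y, h⟩ = -1)

/-!
Write an element `f` of `M[[T]]_{sr}` as `p / q` with `q = ∏ (1 - L^e T^i)`; then `deg q = d := ∑ i`
and the `T^d`-coefficient of `q` is the unit `∏ (-L^e)`, so `lim_{T→∞} f` must be the ratio of the
`T^d`-coefficients of `p` and `q`. This ratio does not depend on the chosen fraction (cross-multiply
and compare top coefficients), is additive and multiplicative, and equals `-1` on the generators
`L^e T^i / (1 - L^e T^i)`; since these generate, this gives existence and uniqueness, and the
limit vanishes when `deg p < d`.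
-/

section

open Polynomial

variable {R : Type*} [CommRing R]

namespace Polynomial

/-- `q(T) / T^d` is a polynomial in `1/T` whose value at `1/T = 0` is a non-zero-divisor. -/
def IsRegularAtInf (q : R[X]) (d : ℕ) : Prop :=
  q.natDegree ≤ d ∧ IsRegular (q.coeff d)

lemma isRegularAtInf_one : (1 : R[X]).IsRegularAtInf 0 :=
  ⟨natDegree_one.le, by simpa using isRegular_one⟩

lemma IsRegularAtInf.mul {q₁ q₂ : R[X]} {d₁ d₂ : ℕ} (h₁ : q₁.IsRegularAtInf d₁)
    (h₂ : q₂.IsRegularAtInf d₂) : (q₁ * q₂).IsRegularAtInf (d₁ + d₂) :=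
  ⟨natDegree_mul_le.trans (add_le_add h₁.1 h₂.1),
    by rw [coeff_mul_add_eq_of_natDegree_le h₁.1 h₂.1]; exact h₁.2.mul h₂.2⟩

lemma isRegularAtInf_one_sub_C_mul_X_pow (u : Rˣ) {n : ℕ} (hn : 0 < n) :
    (1 - C (u : R) * X ^ n).IsRegularAtInf n := by
  refine ⟨(natDegree_sub_le _ _).trans (max_le (by simp) (natDegree_C_mul_X_pow_le _ _)), ?_⟩
  rw [coeff_sub, coeff_one, if_neg hn.ne', coeff_C_mul_X_pow, if_pos rfl, zero_sub]
  exact (-u).isUnit.isRegular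

lemma isRegularAtInf_multiset_prod_one_sub_C_mul_X_pow {ι : Type*} (u : ι → Rˣ) (n : ι → ℕ)
    (s : Multiset ι) (hn : ∀ j ∈ s, 0 < n j) :
    (s.map fun j => 1 - C (u j : R) * X ^ n j).prod.IsRegularAtInf (s.map n).sum := by
  induction s using Multiset.induction with
  | empty => simpa using isRegularAtInf_one
  | cons j s ih =>
    simp only [Multiset.map_cons, Multiset.prod_cons, Multiset.sum_cons]
    exact (isRegularAtInf_one_sub_C_mul_X_pow (u j) (hn j (Multiset.mem_cons_self j s))).mul
      (ih fun k hk => hn k (Multiset.mem_cons_of_mem hk))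

end Polynomial

namespace PowerSeries

/-- `f = p / q` with `p(T) / T^d` and `q(T) / T^d` taking the values `a * c` and `c` at `T = ∞`. -/
def HasLimAtInf (f : R⟦X⟧) (a : R) : Prop :=
  ∃ (p q : R[X]) (d : ℕ), q.IsRegularAtInf d ∧ p.natDegree ≤ d ∧ p.coeff d = a * q.coeff d ∧
    f * q = p

namespace HasLimAtInf

variable {f g : R⟦X⟧} {a b : R}

lemma unique (ha : HasLimAtInf f a) (hb : HasLimAtInf f b) : a = b := by
  obtain ⟨p₁, q₁, d₁, hq₁, hp₁, hc₁, he₁⟩ := ha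
  obtain ⟨p₂, q₂, d₂, hq₂, hp₂, hc₂, he₂⟩ := hb
  have cross : p₁ * q₂ = p₂ * q₁ := by
    refine Polynomial.coe_inj.mp ?_
    rw [Polynomial.coe_mul, Polynomial.coe_mul, ← he₁, ← he₂]
    ring
  have top := congrArg (Polynomial.coeff · (d₁ + d₂)) cross
  rw [coeff_mul_add_eq_of_natDegree_le hp₁ hq₂.1, add_comm,
    coeff_mul_add_eq_of_natDegree_le hp₂ hq₁.1, hc₁, hc₂] at top
  exact (hq₁.2.mul hq₂.2).right (by linear_combination top)

lemma add (ha : HasLimAtInf f a) (hb : HasLimAtInf g b) : HasLimAtInf (f + g) (a + b) := by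
  obtain ⟨p₁, q₁, d₁, hq₁, hp₁, hc₁, he₁⟩ := ha
  obtain ⟨p₂, q₂, d₂, hq₂, hp₂, hc₂, he₂⟩ := hb
  have hp₂' : (p₂ * q₁).natDegree ≤ d₁ + d₂ :=
    natDegree_mul_le.trans ((add_le_add hp₂ hq₁.1).trans_eq (add_comm _ _))
  refine ⟨p₁ * q₂ + p₂ * q₁, q₁ * q₂, d₁ + d₂, hq₁.mul hq₂,
    (natDegree_add_le _ _).trans (max_le (natDegree_mul_le.trans (add_le_add hp₁ hq₂.1)) hp₂'),
    ?_, ?_⟩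
  · rw [coeff_add, coeff_mul_add_eq_of_natDegree_le hp₁ hq₂.1, add_comm d₁,
      coeff_mul_add_eq_of_natDegree_le hp₂ hq₁.1, add_comm d₂,
      coeff_mul_add_eq_of_natDegree_le hq₁.1 hq₂.1, hc₁, hc₂]
    ring
  · rw [Polynomial.coe_add, Polynomial.coe_mul, Polynomial.coe_mul, Polynomial.coe_mul, ← he₁,
      ← he₂]
    ring

lemma mul (ha : HasLimAtInf f a) (hb : HasLimAtInf g b) : HasLimAtInf (f * g) (a * b) := by
  obtain ⟨p₁, q₁, d₁, hq₁, hp₁, hc₁, he₁⟩ := ha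
  obtain ⟨p₂, q₂, d₂, hq₂, hp₂, hc₂, he₂⟩ := hb
  refine ⟨p₁ * p₂, q₁ * q₂, d₁ + d₂, hq₁.mul hq₂, natDegree_mul_le.trans (add_le_add hp₁ hp₂),
    ?_, ?_⟩
  · rw [coeff_mul_add_eq_of_natDegree_le hp₁ hp₂, coeff_mul_add_eq_of_natDegree_le hq₁.1 hq₂.1,
      hc₁, hc₂]
    ring
  · rw [Polynomial.coe_mul, Polynomial.coe_mul, ← he₁, ← he₂]
    ring

lemma neg (ha : HasLimAtInf f a) : HasLimAtInf (-f) (-a) := by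
  obtain ⟨p, q, d, hq, hp, hc, he⟩ := ha
  exact ⟨-p, q, d, hq, (natDegree_neg p).trans_le hp, by rw [coeff_neg, hc, neg_mul],
    by rw [Polynomial.coe_neg, ← he, neg_mul]⟩

end HasLimAtInf

lemma hasLimAtInf_C (a : R) : HasLimAtInf (C a) a :=
  ⟨Polynomial.C a, 1, 0, isRegularAtInf_one, (natDegree_C a).le, by simp, by simp⟩

lemma hasLimAtInf_zero_of_mul_eq {f : R⟦X⟧} {p q : R[X]} {d : ℕ} (hq : q.IsRegularAtInf d)
    (he : f * q = p) (hp : p.natDegree < d) : HasLimAtInf f 0 :=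
  ⟨p, q, d, hq, hp.le, by rw [coeff_eq_zero_of_natDegree_lt hp, zero_mul], he⟩

lemma hasLimAtInf_zero_of_mul_prod_one_sub_eq {ι : Type*} (u : ι → Rˣ) (n : ι → ℕ)
    (s : Multiset ι) (hn : ∀ j ∈ s, 0 < n j) {f : R⟦X⟧} {p : R[X]}
    (he : f * (s.map fun j => 1 - C (u j : R) * X ^ n j).prod = p)
    (hp : p.natDegree < (s.map n).sum) : HasLimAtInf f 0 := by
  refine hasLimAtInf_zero_of_mul_eq (isRegularAtInf_multiset_prod_one_sub_C_mul_X_pow u n s hn)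
    ?_ hp
  rw [← coeToPowerSeries.ringHom_apply, map_multiset_prod, Multiset.map_map]
  simpa [Function.comp_def, coeToPowerSeries.ringHom_apply] using he

lemma hasLimAtInf_neg_one_of_mul_one_sub_eq {y : R⟦X⟧} (u : Rˣ) {n : ℕ} (hn : 0 < n)
    (hy : y * (1 - C (u : R) * X ^ n) = C (u : R) * X ^ n) : HasLimAtInf y (-1) := by
  refine ⟨Polynomial.C (u : R) * Polynomial.X ^ n, 1 - Polynomial.C (u : R) * Polynomial.X ^ n, n,
    isRegularAtInf_one_sub_C_mul_X_pow u hn, natDegree_C_mul_X_pow_le _ _, ?_, by simpa using hy⟩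
  rw [Polynomial.coeff_sub, Polynomial.coeff_one, if_neg hn.ne',
    Polynomial.coeff_C_mul_X_pow, if_pos rfl]
  ring

variable (R) in
def limAtInfSubring : Subring R⟦X⟧ where
  carrier := {f | ∃ a, HasLimAtInf f a}
  one_mem' := ⟨1, by simpa using hasLimAtInf_C (1 : R)⟩
  zero_mem' := ⟨0, by simpa using hasLimAtInf_C (0 : R)⟩
  add_mem' := fun ⟨a, ha⟩ ⟨b, hb⟩ => ⟨a + b, ha.add hb⟩
  mul_mem' := fun ⟨a, ha⟩ ⟨b, hb⟩ => ⟨a * b, ha.mul hb⟩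
  neg_mem' := fun ⟨a, ha⟩ => ⟨-a, ha.neg⟩

noncomputable def limAtInf (f : limAtInfSubring R) : R := f.2.choose

lemma hasLimAtInf_limAtInf (f : limAtInfSubring R) : HasLimAtInf f (limAtInf f) := f.2.choose_spec

variable (R) in
noncomputable def limAtInfHom : limAtInfSubring R →+* R where
  toFun := limAtInf
  map_one' := (hasLimAtInf_limAtInf 1).unique (by simpa using hasLimAtInf_C (1 : R))
  map_zero' := (hasLimAtInf_limAtInf 0).unique (by simpa using hasLimAtInf_C (0 : R))
  map_add' f g := (hasLimAtInf_limAtInf (f + g)).unique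
    ((hasLimAtInf_limAtInf f).add (hasLimAtInf_limAtInf g))
  map_mul' f g := (hasLimAtInf_limAtInf (f * g)).unique
    ((hasLimAtInf_limAtInf f).mul (hasLimAtInf_limAtInf g))

end PowerSeries

open PowerSeries

variable {M : Type*} [CommRing M] (L : Mˣ)

lemma hasLimAtInf_neg_one_of_mem_srGens {y : M⟦X⟧} (hy : y ∈ srGens M L) :
    HasLimAtInf y (-1) :=
  let ⟨e, _, hi, hy⟩ := hy
  hasLimAtInf_neg_one_of_mul_one_sub_eq (L ^ e) hi hy

lemma sr_le_limAtInfSubring : Sr M L ≤ limAtInfSubring M :=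
  Subring.closure_le.mpr <|
    Set.union_subset (Set.range_subset_iff.mpr fun a => ⟨a, hasLimAtInf_C a⟩) fun _ hy => ⟨-1, hasLimAtInf_neg_one_of_mem_srGens L hy⟩

noncomputable def srLimHom : Sr M L →+* M :=
  (limAtInfHom M).comp (Subring.inclusion (sr_le_limAtInfSubring L))

lemma hasLimAtInf_srLimHom (x : Sr M L) : HasLimAtInf x (srLimHom L x) :=
  hasLimAtInf_limAtInf _

lemma limCond_srLimHom : LimCond M L (srLimHom L) :=
  ⟨fun m h => (hasLimAtInf_srLimHom L ⟨_, h⟩).unique (hasLimAtInf_C m),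
    fun _ hy h => (hasLimAtInf_srLimHom L ⟨_, h⟩).unique (hasLimAtInf_neg_one_of_mem_srGens L hy)⟩

variable {L} in
lemma LimCond.hasLimAtInf {φ : Sr M L →+* M} (hφ : LimCond M L φ) (x : Sr M L) :
    HasLimAtInf x (φ x) := by
  obtain ⟨x, hx⟩ := x
  induction hx using Subring.closure_induction with
  | mem y hy =>
    rcases hy with ⟨a, rfl⟩ | hy
    · exact (hφ.1 a _).symm ▸ hasLimAtInf_C a
    · exact (hφ.2 y hy _).symm ▸ hasLimAtInf_neg_one_of_mem_srGens L hy
  | zero => exact (map_zero φ).symm ▸ by simpa using hasLimAtInf_C (0 : M)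
  | one => exact (map_one φ).symm ▸ by simpa using hasLimAtInf_C (1 : M)
  | add x y hx hy ihx ihy => exact (map_add φ ⟨x, hx⟩ ⟨y, hy⟩).symm ▸ ihx.add ihy
  | neg x hx ihx => exact (map_neg φ ⟨x, hx⟩).symm ▸ ihx.neg
  | mul x y hx hy ihx ihy => exact (map_mul φ ⟨x, hx⟩ ⟨y, hy⟩).symm ▸ ihx.mul ihy

end

/-- There exists a unique ring homomorphism `lim_{T→∞} : M[[T]]_{sr} → M` sending
each `L^e T^i (1 − L^e T^i)^{−1}` to `−1` (and each constant to itself).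
Moreover, if `p(T)/q(T) ∈ M[[T]]_{sr}` with `q` a finite product of factors
`(1 − L^e T^i)` (`i > 0`) and `deg_T p < deg_T q = Σ i`, then
`lim_{T→∞} p(T)/q(T) = 0`. -/
theorem stmt8 (M : Type*) [CommRing M] (L : Mˣ) :
    (∃! φ : Sr M L →+* M, LimCond M L φ) ∧
    (∀ φ : Sr M L →+* M, LimCond M L φ →
      ∀ (x : Sr M L) (p : Polynomial M) (s : Multiset (ℤ × ℕ)),
        (∀ ei ∈ s, 0 < ei.2) →
        (x : PowerSeries M) *
            (s.map (fun ei =>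
              1 - (PowerSeries.C : M →+* PowerSeries M) ((L ^ ei.1 : Mˣ) : M) *
                (PowerSeries.X : PowerSeries M) ^ ei.2)).prod =
          (p : PowerSeries M) →
        p.natDegree < (s.map Prod.snd).sum → φ x = 0) := by
  refine ⟨⟨srLimHom L, limCond_srLimHom L, fun ψ hψ =>
    RingHom.ext fun x => (hψ.hasLimAtInf x).unique (hasLimAtInf_srLimHom L x)⟩, ?_⟩
  intro φ hφ x p s hs he hp
  exact (hφ.hasLimAtInf x).unique <| PowerSeries.hasLimAtInf_zero_of_mul_prod_one_sub_eq
    (fun ei => L ^ ei.1) Prod.snd s hs (f := x) he hp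
end

section
/- With φ₁ : M₀ × ℤ → M₁, (λ,a) ↦ λ + aλ₁ as above, and ρ̄₁ = { (ν, ⟨ν, λ₁⟩) : ν ∈ ℝ^d_{≥0} } ⊂ ℝ^{d+1}, one has φ₁^{−1}( (ℝ^d_{≥0})^∨ ∩ M₁ ) = ρ̄₁^∨ ∩ (M₀ × ℤ), and consequently the semigroup ρ̄₁^∨ ∩ (M₀ × ℤ) is isomorphic to (ℚ^d_{≥0} ∩ M₁) × ℤ. -/
/-- The lattice `M₀ = ℤ^d` inside `ℚ^d`. -/
def latM0 (d : ℕ) : AddSubgroup (Fin d → ℚ) where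
  carrier := {x | ∀ i, ∃ z : ℤ, x i = z}
  zero_mem' := fun i => ⟨0, by simp⟩
  add_mem' := by
    intro a b ha hb i
    obtain ⟨za, hza⟩ := ha i
    obtain ⟨zb, hzb⟩ := hb i
    exact ⟨za + zb, by simp [hza, hzb]⟩
  neg_mem' := by
    intro a ha i
    obtain ⟨z, hz⟩ := ha i
    exact ⟨-z, by simp [hz]⟩

/-! Scaling `(1, λ₁)` to a primitive integer vector `(k, K)` and choosing a Bézout functional `ψ`
with `ψ (-K, k) = 1`, the kernel of `φ₁ : ℤ^d × ℤ → M₁` is `ℤ • (-K, k)`, so `(φ₁, ψ)` is an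
isomorphism `ℤ^d × ℤ ≃ M₁ × ℤ`. Since the positive orthant is self-dual, `ρ̄₁^∨ ∩ (M₀ × ℤ)` is
the preimage under `φ₁` of the positive orthant, and it corresponds to `(ℚ^d_{≥0} ∩ M₁) × ℤ`. -/

open Function

section Splitting

variable {G H : Type*} [AddCommGroup G] [AddCommGroup H] {φ : G →+ H} {ψ : G →+ ℤ} {v : G}

theorem AddMonoidHom.injective_prod_of_ker_eq_zmultiples (hker : φ.ker = AddSubgroup.zmultiples v)
    (hv : ψ v = 1) : Injective (φ.prod ψ) := by
  refine (injective_iff_map_eq_zero _).2 fun x hx => ?_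
  obtain ⟨hφx, hψx⟩ := Prod.ext_iff.1 hx
  obtain ⟨n, rfl⟩ := AddSubgroup.mem_zmultiples_iff.1 (hker ▸ φ.mem_ker.2 hφx)
  simp_all

theorem AddMonoidHom.exists_map_eq_and_eq_of_ker_eq_zmultiples
    (hker : φ.ker = AddSubgroup.zmultiples v) (hv : ψ v = 1) (x : G) (n : ℤ) :
    ∃ y, φ y = φ x ∧ ψ y = n := by
  have hφv : φ v = 0 := φ.mem_ker.1 (hker ▸ AddSubgroup.mem_zmultiples v)
  exact ⟨x + (n - ψ x) • v, by simp [hφv], by simp [hv]⟩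

end Splitting

theorem forall_nonneg_sum_mul_iff {ι : Type*} [Fintype ι] (w : ι → ℝ) :
    (∀ ν : ι → ℝ, (∀ i, 0 ≤ ν i) → 0 ≤ ∑ i, ν i * w i) ↔ ∀ i, 0 ≤ w i := by
  classical
  refine ⟨fun h i => ?_, fun h ν hν => Finset.sum_nonneg fun i _ => mul_nonneg (hν i) (h i)⟩
  simpa [Pi.single_apply] using h (Pi.single i 1) (fun j => by by_cases j = i <;> simp [*])

theorem Rat.exists_primitive_integer_multiple {ι : Type*} [Fintype ι] (lam : ι → ℚ) :
    ∃ (k : ℤ) (K : ι → ℤ) (c : ℤ) (μ : ι → ℤ),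
      (∀ i, (K i : ℚ) = k * lam i) ∧ k * c + ∑ i, K i * μ i = 1 := by
  obtain ⟨⟨D, hD⟩, hDlam⟩ := IsLocalization.exist_integer_multiples_of_finite (nonZeroDivisors ℤ) lam
  choose K₀ hK₀ using hDlam
  obtain ⟨g, hg, hg1⟩ := Finset.extract_gcd (s := Finset.univ)
    (fun o : Option ι => o.elim D K₀) ⟨none, Finset.mem_univ _⟩
  obtain ⟨h, hh⟩ := Finset.gcd_eq_sum_mul Finset.univ g
  refine ⟨g none, g ∘ some, h none, h ∘ some, fun i => ?_, ?_⟩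
  · set G := Finset.univ.gcd fun o : Option ι => o.elim D K₀
    have hDG : D = G * g none := hg none (Finset.mem_univ _)
    have hKG : K₀ i = G * g (some i) := hg (some i) (Finset.mem_univ _)
    have hG : (G : ℚ) ≠ 0 := by
      have := nonZeroDivisors.ne_zero hD
      exact_mod_cast left_ne_zero_of_mul (hDG ▸ this)
    have hK₀i : (K₀ i : ℚ) = D * lam i := by simpa using hK₀ i
    apply mul_left_cancel₀ hG
    push_cast [hDG, hKG] at hK₀i
    simp only [comp_apply]
    linear_combination hK₀i
  · rw [hg1, Fintype.sum_option] at hh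
    simp only [comp_apply]
    linear_combination -hh

section GraphHom

variable {ι : Type*} (lam : ι → ℚ)

/-- The map `φ₁ : (m, a) ↦ m + a • λ₁`. -/
def graphHom : (ι → ℤ) × ℤ →+ (ι → ℚ) :=
  AddMonoidHom.mk' (fun p i => p.1 i + p.2 * lam i) fun p q => by
    funext i; simp only [Prod.fst_add, Prod.snd_add, Pi.add_apply]; push_cast; ring

@[simp]
theorem graphHom_apply (p : (ι → ℤ) × ℤ) (i : ι) : graphHom lam p i = p.1 i + p.2 * lam i :=
  rfl

theorem exists_ker_graphHom_eq_zmultiples [Fintype ι] :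
    ∃ (v : (ι → ℤ) × ℤ) (ψ : (ι → ℤ) × ℤ →+ ℤ),
      (graphHom lam).ker = AddSubgroup.zmultiples v ∧ ψ v = 1 := by
  obtain ⟨k, K, c, μ, hK, hbezout⟩ := Rat.exists_primitive_integer_multiple lam
  let ψ : (ι → ℤ) × ℤ →+ ℤ := AddMonoidHom.mk' (fun p => p.2 * c - ∑ i, p.1 i * μ i) fun p q => by
    simp only [Prod.fst_add, Prod.snd_add, Pi.add_apply, add_mul, Finset.sum_add_distrib]; ring
  refine ⟨(-K, k), ψ, ?_, by simpa [ψ] using hbezout⟩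
  ext ⟨m, a⟩
  simp only [AddMonoidHom.mem_ker, AddSubgroup.mem_zmultiples_iff, funext_iff, graphHom_apply,
    Pi.zero_apply, Prod.ext_iff, Prod.smul_fst, Prod.smul_snd, Pi.smul_apply, Pi.neg_apply,
    smul_eq_mul]
  constructor
  · intro h
    have hkm : ∀ i, k * m i = -a * K i := fun i => by
      have : (k : ℚ) * m i = -a * K i := by rw [hK]; linear_combination (k : ℚ) * h i
      exact_mod_cast this
    have hsum : (∑ i, m i * μ i) * k = -a * ∑ i, K i * μ i := by
      rw [Finset.sum_mul, Finset.mul_sum]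
      exact Finset.sum_congr rfl fun i _ => by linear_combination μ i * hkm i
    have hkt : ψ (m, a) * k = a := by
      simp only [ψ, AddMonoidHom.mk'_apply]
      linear_combination a * hbezout - hsum
    refine ⟨ψ (m, a), fun i => Int.cast_injective (α := ℚ) ?_, hkt⟩
    have : ((ψ (m, a) * k : ℤ) : ℚ) = a := by rw [hkt]
    push_cast at this ⊢
    rw [hK]
    linear_combination (- lam i) * this - h i
  · rintro ⟨t, hm, rfl⟩ i
    rw [← hm]
    push_cast
    rw [hK]
    ring

theorem forall_nonneg_sum_mul_graphHom_iff [Fintype ι] (p : (ι → ℤ) × ℤ) :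
    (∀ ν : ι → ℝ, (∀ i, 0 ≤ ν i) → 0 ≤ ∑ i, ν i * ((p.1 i : ℝ) + (p.2 : ℝ) * (lam i : ℝ))) ↔
      ∀ i, 0 ≤ graphHom lam p i := by
  rw [forall_nonneg_sum_mul_iff]
  exact forall_congr' fun i => by exact_mod_cast Rat.cast_nonneg (K := ℝ)

end GraphHom

theorem range_graphHom (d : ℕ) (lam : Fin d → ℚ) :
    (graphHom lam).range = latM0 d ⊔ AddSubgroup.closure {lam} := by
  ext q
  rw [AddMonoidHom.mem_range, AddSubgroup.mem_sup]
  constructor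
  · rintro ⟨⟨m, a⟩, rfl⟩
    exact ⟨fun i => m i, fun i => ⟨m i, rfl⟩, a • lam,
      AddSubgroup.mem_closure_singleton.2 ⟨a, rfl⟩, by ext; simp⟩
  · rintro ⟨y, hy, w, hw, rfl⟩
    choose m hm using hy
    obtain ⟨a, rfl⟩ := AddSubgroup.mem_closure_singleton.1 hw
    exact ⟨(m, a), by ext i; simp [hm]⟩

theorem stmt12_general (d : ℕ) (lam : Fin d → ℚ) :
    (∀ p : (Fin d → ℤ) × ℤ,
      ((∀ ν : Fin d → ℝ, (∀ i, 0 ≤ ν i) →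
          0 ≤ ∑ i, ν i * ((p.1 i : ℝ) + (p.2 : ℝ) * (lam i : ℝ))) ↔
        ∀ i, 0 ≤ (p.1 i : ℚ) + (p.2 : ℚ) * lam i)) ∧
    (∃ e : {p : (Fin d → ℤ) × ℤ // ∀ ν : Fin d → ℝ, (∀ i, 0 ≤ ν i) →
          0 ≤ ∑ i, ν i * ((p.1 i : ℝ) + (p.2 : ℝ) * (lam i : ℝ))} ≃
        {q : (Fin d → ℚ) × ℤ // (∀ i, 0 ≤ q.1 i) ∧
          q.1 ∈ latM0 d ⊔ AddSubgroup.closure {lam}},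
      ∀ a b c, (a : {p : (Fin d → ℤ) × ℤ // ∀ ν : Fin d → ℝ, (∀ i, 0 ≤ ν i) →
          0 ≤ ∑ i, ν i * ((p.1 i : ℝ) + (p.2 : ℝ) * (lam i : ℝ))}).1 + b.1 = c.1 →
        (e a).1 + (e b).1 = (e c).1) := by
  have hdual := forall_nonneg_sum_mul_graphHom_iff lam
  obtain ⟨v, ψ, hker, hv⟩ := exists_ker_graphHom_eq_zmultiples lam
  let e := fun p : {p : (Fin d → ℤ) × ℤ // ∀ ν : Fin d → ℝ, (∀ i, 0 ≤ ν i) →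
          0 ≤ ∑ i, ν i * ((p.1 i : ℝ) + (p.2 : ℝ) * (lam i : ℝ))} =>
    (⟨(graphHom lam).prod ψ p, (hdual p).1 p.2, range_graphHom d lam ▸ AddMonoidHom.mem_range.2 ⟨p, rfl⟩⟩ :
      {q : (Fin d → ℚ) × ℤ // (∀ i, 0 ≤ q.1 i) ∧ q.1 ∈ latM0 d ⊔ AddSubgroup.closure {lam}})
  have he : Bijective e := by
    refine ⟨fun p q hpq => Subtype.ext (AddMonoidHom.injective_prod_of_ker_eq_zmultiples hker hv
      (congrArg Subtype.val hpq)), ?_⟩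
    rintro ⟨⟨q, n⟩, hq, hqM⟩
    obtain ⟨x, rfl⟩ := (range_graphHom d lam ▸ hqM : q ∈ (graphHom lam).range)
    obtain ⟨y, hyx, hyn⟩ := AddMonoidHom.exists_map_eq_and_eq_of_ker_eq_zmultiples hker hv x n
    exact ⟨⟨y, (hdual y).2 fun i => show 0 ≤ graphHom lam y i from hyx ▸ hq i⟩,
      Subtype.ext (Prod.ext hyx hyn)⟩
  exact ⟨hdual, Equiv.ofBijective e he, fun a b c habc => by
    simp only [Equiv.ofBijective_apply, e, ← habc, map_add]⟩

/-- With `φ₁ : M₀ × ℤ → M₁`, `(λ,a) ↦ λ + aλ₁`, and the graph cone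
`ρ̄₁ = {(ν, ⟨ν, λ₁⟩) : ν ∈ ℝ^d_{≥0}}`, one has
`φ₁^{−1}(ρ^∨ ∩ M₁) = ρ̄₁^∨ ∩ (M₀ × ℤ)`: i.e. `(m,a)` pairs nonnegatively with
every `(ν, ⟨ν,λ₁⟩)`, `ν ≥ 0`, iff `m + aλ₁` has nonnegative coordinates.
Consequently the semigroup `ρ̄₁^∨ ∩ (M₀ × ℤ)` is isomorphic to
`(ℚ^d_{≥0} ∩ M₁) × ℤ`. -/
theorem stmt12 (d : ℕ) (lam : Fin d → ℚ)
    (hlam0 : ∀ i, 0 ≤ lam i)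
    (hlam : ¬ ∀ i, ∃ z : ℤ, lam i = z) :
    (∀ p : (Fin d → ℤ) × ℤ,
      ((∀ ν : Fin d → ℝ, (∀ i, 0 ≤ ν i) →
          0 ≤ ∑ i, ν i * ((p.1 i : ℝ) + (p.2 : ℝ) * (lam i : ℝ))) ↔
        ∀ i, 0 ≤ (p.1 i : ℚ) + (p.2 : ℚ) * lam i)) ∧
    (∃ e : {p : (Fin d → ℤ) × ℤ // ∀ ν : Fin d → ℝ, (∀ i, 0 ≤ ν i) →
          0 ≤ ∑ i, ν i * ((p.1 i : ℝ) + (p.2 : ℝ) * (lam i : ℝ))} ≃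
        {q : (Fin d → ℚ) × ℤ // (∀ i, 0 ≤ q.1 i) ∧
          q.1 ∈ latM0 d ⊔ AddSubgroup.closure {lam}},
      ∀ a b c, (a : {p : (Fin d → ℤ) × ℤ // ∀ ν : Fin d → ℝ, (∀ i, 0 ≤ ν i) →
          0 ≤ ∑ i, ν i * ((p.1 i : ℝ) + (p.2 : ℝ) * (lam i : ℝ))}).1 + b.1 = c.1 →
        (e a).1 + (e b).1 = (e c).1) :=
  stmt12_general d lam
end

section
/- Define B_i^{(1)} := e_0 q_i^{(1)}, B_i^{(j)} := p_i^{(j)} B_i^{(j−1)} + e_{j−1} q_i^{(j)}, b_i^{(1)} := p_i^{(1)} + q_i^{(1)}, b_i^{(j)} := p_i^{(j)} b_i^{(j−1)} + q_i^{(j)}. Let ν_i^{(j)} = s_j(ε_i^{(j)}) ∈ ℤ^{d+g+1} where ε_i^{(j)} = p_i^{(j)} ε_i^{(j−1)} (with ε_i^{(0)} = ε_i the standard basis). Then B_i^{(j)} = η(ν_i^{(j)}) and b_i^{(j)} = ξ_j(ν_i^{(j)}) for all 1 ≤ i ≤ d and 1 ≤ j ≤ g, where η(k) = k_{d+g+1}.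 -/
/-!
Write `P j = p 1 ⋯ p j` and `E j = n j ⋯ n g`. The recursion for the `γ j`, together with
`(λ (j+1) - λ j) * P (j+1) = q (j+1)`, says that `Γ j := P j * γ j` satisfies `Γ 1 = q 1` and
`Γ (j+1) = p (j+1) * n j * Γ j + q (j+1)`. Since `E j = n j * E (j+1)`, both `B j` and
`E j * Γ j` then obey the recursion defining `B`, and both `b j` and
`P j * (1 + ∑_{l<j} (1 - n l) * γ l) + Γ j` obey the recursion defining `b`.
-/

open Finset

namespace QuasiOrdinary

variable {R : Type*} [CommRing R] {g : ℕ} (p q n γ : ℕ → R)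

theorem prod_Icc_eq_mul_prod_Icc_succ {M : Type*} [CommMonoid M] (f : ℕ → M) {a b : ℕ}
    (h : a ≤ b) : ∏ l ∈ Icc a b, f l = f a * ∏ l ∈ Icc (a + 1) b, f l := by
  rw [Icc_add_one_left_eq_Ioc, mul_prod_Ioc_eq_prod_Icc h]

theorem prod_mul_succ_eq {lam : ℕ → R} {j : ℕ}
    (hγ : γ (j + 1) = n j * γ j + (lam (j + 1) - lam j))
    (hq : (lam (j + 1) - lam j) * ∏ l ∈ Icc 1 (j + 1), p l = q (j + 1)) :
    (∏ l ∈ Icc 1 (j + 1), p l) * γ (j + 1) =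
      p (j + 1) * n j * ((∏ l ∈ Icc 1 j, p l) * γ j) + q (j + 1) := by
  rw [prod_Icc_succ_top (by omega)] at hq ⊢
  rw [hγ]
  linear_combination hq

section Recursions

variable (hΓ1 : (∏ l ∈ Icc 1 1, p l) * γ 1 = q 1)
  (hΓ : ∀ j, 1 ≤ j → j < g →
    (∏ l ∈ Icc 1 (j + 1), p l) * γ (j + 1) =
      p (j + 1) * n j * ((∏ l ∈ Icc 1 j, p l) * γ j) + q (j + 1))
include hΓ1 hΓ

theorem eq_prod_mul_prod_mul_of_rec {B : ℕ → R}
    (hB1 : B 1 = (∏ l ∈ Icc 1 g, n l) * q 1)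
    (hBrec : ∀ j, 2 ≤ j → j ≤ g → B j = p j * B (j - 1) + (∏ l ∈ Icc j g, n l) * q j) :
    ∀ j, 1 ≤ j → j ≤ g → B j = (∏ l ∈ Icc j g, n l) * (∏ l ∈ Icc 1 j, p l) * γ j := by
  intro j hj
  induction j, hj using Nat.le_induction with
  | base => intro; rw [hB1, mul_assoc, hΓ1]
  | succ j hj ih =>
    intro hjg
    rw [hBrec (j + 1) (by omega) hjg, Nat.add_sub_cancel, ih (by omega),
      prod_Icc_eq_mul_prod_Icc_succ _ (by omega : j ≤ g), mul_assoc _ _ (γ (j + 1)),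
      hΓ j hj (by omega)]
    ring

theorem eq_prod_mul_one_add_sum_of_rec {b : ℕ → R}
    (hb1 : b 1 = p 1 + q 1)
    (hbrec : ∀ j, 2 ≤ j → j ≤ g → b j = p j * b (j - 1) + q j) :
    ∀ j, 1 ≤ j → j ≤ g → b j =
      (∏ l ∈ Icc 1 j, p l) * (1 + (∑ l ∈ Icc 1 (j - 1), (1 - n l) * γ l) + γ j) := by
  intro j hj
  induction j, hj using Nat.le_induction with
  | base => intro; simp [hb1, ← hΓ1, mul_add]
  | succ j hj ih =>
    intro hjg
    obtain ⟨k, rfl⟩ : ∃ k, j = k + 1 := ⟨j - 1, by omega⟩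
    simp only [Nat.add_sub_cancel] at ih ⊢
    have hΓk := hΓ (k + 1) hj hjg
    rw [prod_Icc_succ_top (b := k + 1) (by omega)] at hΓk ⊢
    rw [hbrec (k + 1 + 1) (by omega) hjg, Nat.add_sub_cancel, ih (by omega),
      sum_Icc_succ_top (by omega)]
    linear_combination -hΓk

end Recursions

end QuasiOrdinary

open QuasiOrdinary in
theorem stmt15_general (d g : ℕ) (p q : ℕ → Fin d → ℕ) (n : ℕ → ℕ)
    (lam γ : ℕ → Fin d → ℚ) (B b : ℕ → Fin d → ℤ)
    (hg : 1 ≤ g)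
    (hlam0 : lam 0 = 0)
    (hlamrec : ∀ j, 1 ≤ j → j ≤ g → ∀ i,
      (lam j i - lam (j - 1) i) * (∏ l ∈ Finset.Icc 1 j, (p l i : ℚ)) = q j i)
    (hγ1 : γ 1 = lam 1)
    (hγ : ∀ j, 1 ≤ j → j < g →
      γ (j + 1) = (n j : ℚ) • γ j + (lam (j + 1) - lam j))
    (hB1 : ∀ i, B 1 i = (∏ l ∈ Finset.Icc 1 g, (n l : ℤ)) * q 1 i)
    (hBrec : ∀ j, 2 ≤ j → j ≤ g → ∀ i,
      B j i = (p j i : ℤ) * B (j - 1) i + (∏ l ∈ Finset.Icc j g, (n l : ℤ)) * q j i)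
    (hb1 : ∀ i, b 1 i = (p 1 i : ℤ) + q 1 i)
    (hbrec : ∀ j, 2 ≤ j → j ≤ g → ∀ i,
      b j i = (p j i : ℤ) * b (j - 1) i + q j i) :
    ∀ j, 1 ≤ j → j ≤ g → ∀ i,
      ((B j i : ℚ) =
        (∏ l ∈ Finset.Icc j g, (n l : ℚ)) *
          (∏ l ∈ Finset.Icc 1 j, (p l i : ℚ)) * γ j i) ∧
      ((b j i : ℚ) =
        (∏ l ∈ Finset.Icc 1 j, (p l i : ℚ)) *
          (1 + (∑ l ∈ Finset.Icc 1 (j - 1), (1 - (n l : ℚ)) * γ l i) + γ j i)) := by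
  intro j hj hjg i
  let P : ℕ → ℚ := fun l => p l i
  let Q : ℕ → ℚ := fun l => q l i
  let N : ℕ → ℚ := fun l => n l
  let G : ℕ → ℚ := fun l => γ l i
  have hΓ1 : (∏ l ∈ Icc 1 1, P l) * G 1 = Q 1 := by
    simpa [P, Q, G, hγ1, hlam0, mul_comm] using hlamrec 1 le_rfl hg i
  have hΓ : ∀ j, 1 ≤ j → j < g →
      (∏ l ∈ Icc 1 (j + 1), P l) * G (j + 1) =
        P (j + 1) * N j * ((∏ l ∈ Icc 1 j, P l) * G j) + Q (j + 1) :=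
    fun j hj hjg => prod_mul_succ_eq P Q N G (lam := fun l => lam l i)
      (by simpa using congrFun (hγ j hj hjg) i)
      (by simpa using hlamrec (j + 1) (by omega) hjg i)
  have hη := eq_prod_mul_prod_mul_of_rec P Q N G hΓ1 hΓ (B := fun j => (B j i : ℚ))
    (by dsimp only [Q, N]; exact_mod_cast hB1 i)
    (fun j hj hjg => by dsimp only [P, Q, N]; exact_mod_cast hBrec j hj hjg i)
  have hξ := eq_prod_mul_one_add_sum_of_rec P Q N G hΓ1 hΓ (b := fun j => (b j i : ℚ))
    (by dsimp only [P, Q]; exact_mod_cast hb1 i)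
    (fun j hj hjg => by dsimp only [P, Q]; exact_mod_cast hbrec j hj hjg i)
  exact ⟨hη j hj hjg, hξ j hj hjg⟩

/-- Setting: characteristic exponents `λ_j ∈ ℚ^d` of a quasi-ordinary branch with
`λ_j − λ_{j−1} = Σ_i (q_i^{(j)}/p_i^{(j)}) ε_i^{(j−1)}` in irreducible form in the
rescaled dual basis (so coordinatewise
`(λ_j − λ_{j−1})_i · p_i^{(1)}⋯p_i^{(j)} = q_i^{(j)}`), and semigroup generators
`γ_j` with `γ_1 = λ_1`, `γ_{j+1} = n_j γ_j + λ_{j+1} − λ_j`.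
Define `B_i^{(1)} = e_0 q_i^{(1)}`, `B_i^{(j)} = p_i^{(j)} B_i^{(j−1)} + e_{j−1} q_i^{(j)}`,
`b_i^{(1)} = p_i^{(1)} + q_i^{(1)}`, `b_i^{(j)} = p_i^{(j)} b_i^{(j−1)} + q_i^{(j)}`,
where `e_{j−1} = n_j⋯n_g`.  Then `B_i^{(j)} = η(ν_i^{(j)})` and
`b_i^{(j)} = ξ_j(ν_i^{(j)})`, where `ν_i^{(j)} = s_j(ε_i^{(j)})` with
`ε_i^{(j)} = (p_i^{(1)}⋯p_i^{(j)}) ε_i`; explicitly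
`η(ν_i^{(j)}) = (n_j⋯n_g)·(p_i^{(1)}⋯p_i^{(j)})·γ_{j,i}` and
`ξ_j(ν_i^{(j)}) = (p_i^{(1)}⋯p_i^{(j)})·(1 + Σ_{l=1}^{j−1}(1−n_l)γ_{l,i} + γ_{j,i})`. -/
theorem stmt15 (d g : ℕ) (p q : ℕ → Fin d → ℕ) (n : ℕ → ℕ)
    (lam γ : ℕ → Fin d → ℚ) (B b : ℕ → Fin d → ℤ)
    (hg : 1 ≤ g)
    (hp : ∀ j i, 0 < p j i)
    (hpq : ∀ j i, Nat.Coprime (p j i) (q j i))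
    (hlam0 : lam 0 = 0)
    (hlamrec : ∀ j, 1 ≤ j → j ≤ g → ∀ i,
      (lam j i - lam (j - 1) i) * (∏ l ∈ Finset.Icc 1 j, (p l i : ℚ)) = q j i)
    (hγ1 : γ 1 = lam 1)
    (hγ : ∀ j, 1 ≤ j → j < g →
      γ (j + 1) = (n j : ℚ) • γ j + (lam (j + 1) - lam j))
    (hB1 : ∀ i, B 1 i = (∏ l ∈ Finset.Icc 1 g, (n l : ℤ)) * q 1 i)
    (hBrec : ∀ j, 2 ≤ j → j ≤ g → ∀ i,
      B j i = (p j i : ℤ) * B (j - 1) i + (∏ l ∈ Finset.Icc j g, (n l : ℤ)) * q j i)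
    (hb1 : ∀ i, b 1 i = (p 1 i : ℤ) + q 1 i)
    (hbrec : ∀ j, 2 ≤ j → j ≤ g → ∀ i,
      b j i = (p j i : ℤ) * b (j - 1) i + q j i) :
    ∀ j, 1 ≤ j → j ≤ g → ∀ i,
      ((B j i : ℚ) =
        (∏ l ∈ Finset.Icc j g, (n l : ℚ)) *
          (∏ l ∈ Finset.Icc 1 j, (p l i : ℚ)) * γ j i) ∧
      ((b j i : ℚ) =
        (∏ l ∈ Finset.Icc 1 j, (p l i : ℚ)) *
          (1 + (∑ l ∈ Finset.Icc 1 (j - 1), (1 - (n l : ℚ)) * γ l i) + γ j i)) :=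
  stmt15_general d g p q n lam γ B b hg hlam0 hlamrec hγ1 hγ hB1 hBrec hb1 hbrec
end
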